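/- arXiv:2004.10192 — 2 statements merged into one kernel-verified Lean document; each statement's English description precedes it below -/
import Mathlib

section
/- For every integer n ≥ 2, the complete coloring number of the n×n square grid graph satisfies Γ(G_n) ≥ 2n−9. Moreover, Γ(G_n) ≥ 2n−6 if n ≡ 0 or 1 (mod 4), Γ(G_n) ≥ 2n−7 if n ≡ 2 (mod 4), and Γ(G_n) ≥ 2n−9 if n ≡ 3 (mod 4). -/
/-- The rectangular grid graph `R_{m×n}`: vertices are pairs `(i,j)` with
`i < m`, `j < n`, adjacent iff they differ by exactly one in exactly one
coordinate. -/
def gridGraph (m n : ℕ) : SimpleGraph (Fin m × Fin n) where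
  Adj p q := (p.1 = q.1 ∧ ((p.2 : ℕ) + 1 = q.2 ∨ (q.2 : ℕ) + 1 = p.2)) ∨
             (p.2 = q.2 ∧ ((p.1 : ℕ) + 1 = q.1 ∨ (q.1 : ℕ) + 1 = p.1))
  symm := by
    refine ⟨?_⟩
    rintro p q (⟨h, h'⟩ | ⟨h, h'⟩)
    · exact Or.inl ⟨h.symm, h'.symm⟩
    · exact Or.inr ⟨h.symm, h'.symm⟩
  loopless := by
    refine ⟨?_⟩
    rintro p (⟨_, h | h⟩ | ⟨_, h | h⟩) <;> omega

/-- `c` is a `k`-complete coloring of `G`: every pair of distinct colors appears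
on some edge. -/
def IsCompleteColoring {V : Type*} (G : SimpleGraph V) (k : ℕ) (c : V → Fin k) : Prop :=
  ∀ i j : Fin k, i ≠ j → ∃ u v, G.Adj u v ∧ c u = i ∧ c v = j

/-- `c` is a `k`-complete proper coloring of `G`. -/
def IsCompleteProperColoring {V : Type*} (G : SimpleGraph V) (k : ℕ) (c : V → Fin k) : Prop :=
  IsCompleteColoring G k c ∧ ∀ u v, G.Adj u v → c u ≠ c v

/-- The complete coloring number `Γ(G)`: the maximum `k` admitting a
`k`-complete coloring. -/
noncomputable def completeColoringNumber {V : Type*} (G : SimpleGraph V) : ℕ :=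
  sSup {k | ∃ c : V → Fin k, IsCompleteColoring G k c}

/-- The achromatic number `Ψ(G)`: the maximum `k` admitting a `k`-complete
proper coloring. -/
noncomputable def achromaticNumber {V : Type*} (G : SimpleGraph V) : ℕ :=
  sSup {k | ∃ c : V → Fin k, IsCompleteProperColoring G k c}

/-!
Colour the vertex `(i, j)` of the `(m + 3) × (m + 3)` grid by `a i + b j ∈ ZMod (2 m)` for
suitable row and column sequences `a = rowSeq m`, `b = colSeq m`. A row step
`a (i + 1) = a i + d` makes the vertical edges at row `i` join `x` and `x + d` for every
`x ∈ a i + range b`, and symmetrically for column steps; as `d` and `-d` give the same pairs, it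
suffices to realise every `0 < d ≤ m` at every base point `x`. Zigzag sequences, whose consecutive
differences are all distinct, do this. The rows run through all even residues and contain each even
step `2 f ≤ m` at two base points `2 ⌈m/2⌉` apart, one of which lies in `[x - m, x]`, where the
columns (taking every value in `[0, m]`) reach. The columns contain each odd step `d ≤ m` from base
points of either parity, and the rows supply the even remainder. Hence `Γ(G_n) ≥ 2 (n - 3)`.
-/

section CompleteColoring

variable {V : Type*} {G : SimpleGraph V} {k : ℕ}

theorem IsCompleteColoring.surjective {c : V → Fin k} (hc : IsCompleteColoring G k c)
    (hk : 2 ≤ k) : Function.Surjective c := by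
  intro i
  have : Nontrivial (Fin k) := Fin.nontrivial_iff_two_le.2 hk
  obtain ⟨j, hji⟩ := exists_ne i
  obtain ⟨u, -, -, hu, -⟩ := hc i j hji.symm
  exact ⟨u, hu⟩

theorem IsCompleteColoring.le_completeColoringNumber [Finite V] {c : V → Fin k}
    (hc : IsCompleteColoring G k c) : k ≤ completeColoringNumber G := by
  refine le_csSup ⟨Nat.card V + 1, ?_⟩ ⟨c, hc⟩
  rintro l ⟨c', hc'⟩
  rcases lt_or_ge l 2 with hl | hl
  · omega
  · simpa using (Nat.card_le_card_of_surjective c' (hc'.surjective hl)).trans (Nat.le_succ _)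

theorem isCompleteColoring_of_forall_add [NeZero k] (g : V → ZMod k)
    (h : ∀ x d : ZMod k, d ≠ 0 → d.val ≤ k / 2 → ∃ u v, G.Adj u v ∧ g u = x ∧ g v = x + d) :
    IsCompleteColoring G k fun v => ⟨(g v).val, ZMod.val_lt _⟩ := by
  have hpair : ∀ a b : ZMod k, a ≠ b → (b - a).val ≤ k / 2 →
      ∃ u v, G.Adj u v ∧ g u = a ∧ g v = b := by
    intro a b hab hle
    simpa using h a (b - a) (sub_ne_zero.2 hab.symm) hle
  intro i j hij
  have hij' : (i : ZMod k) ≠ j := fun h => hij (Fin.ext (by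
    simpa [ZMod.val_cast_of_lt i.isLt, ZMod.val_cast_of_lt j.isLt] using congrArg ZMod.val h))
  have hval : ∀ (v : V) (l : Fin k), g v = (l : ℕ) → (⟨(g v).val, ZMod.val_lt _⟩ : Fin k) = l :=
    fun v l hv => Fin.ext (show (g v).val = l by rw [hv, ZMod.val_cast_of_lt l.isLt])
  rcases le_or_gt ((j : ZMod k) - i).val (k / 2) with hle | hgt
  · obtain ⟨u, v, huv, hu, hv⟩ := hpair _ _ hij' hle
    exact ⟨u, v, huv, hval u i hu, hval v j hv⟩
  · have hle : ((i : ZMod k) - j).val ≤ k / 2 := by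
      rw [← neg_sub, ZMod.neg_val, if_neg (sub_ne_zero.2 hij'.symm)]
      omega
    obtain ⟨u, v, huv, hu, hv⟩ := hpair _ _ hij'.symm hle
    exact ⟨v, u, huv.symm, hval v i hv, hval u j hu⟩

end CompleteColoring

def concatSeq (L : ℕ) (f g : ℕ → ℕ) (i : ℕ) : ℕ := if i < L then f i else g (i - L)

theorem concatSeq_of_lt {L i : ℕ} (f g : ℕ → ℕ) (h : i < L) : concatSeq L f g i = f i :=
  if_pos h

theorem concatSeq_add (L : ℕ) (f g : ℕ → ℕ) (i : ℕ) : concatSeq L f g (L + i) = g i := by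
  simp [concatSeq]

/-- `0, M - 1, 2, M - 3, 4, …`: consecutive terms differ by `M - 1, M - 3, M - 5, …`. -/
def zigzag (M t : ℕ) : ℕ := if t % 2 = 0 then t else M - t

theorem exists_zigzag_eq_or_succ_eq {M v : ℕ} (hv : v ≤ M) :
    ∃ t ≤ M / 2, zigzag M t = v ∨ zigzag M t + 1 = v := by
  refine ⟨if 2 * (v - v % 2) ≤ M then v - v % 2 else if (M - v) % 2 = 1 then M - v else M + 1 - v,
    ?_, ?_⟩
  · split_ifs <;> omega
  · unfold zigzag; split_ifs <;> omega

theorem zigzag_mod_two_of_odd {M t : ℕ} (hM : M % 2 = 1) (ht : t ≤ M) : zigzag M t % 2 = 0 := by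
  unfold zigzag; split_ifs <;> omega

theorem exists_zigzag_step {M t : ℕ} (ht : 2 * t < M) :
    ∃ a b lo, (a + 1 = b ∨ b + 1 = a) ∧ a ≤ t + 1 ∧ b ≤ t + 1 ∧ lo % 2 = 0 ∧ lo ≤ t + 1 ∧
      zigzag M a = lo ∧ zigzag M b = lo + (M - 2 * t - 1) := by
  rcases Nat.mod_two_eq_zero_or_one t with h | h
  · exact ⟨t, t + 1, t, by unfold zigzag; split_ifs <;> omega⟩
  · exact ⟨t + 1, t, t + 1, by unfold zigzag; split_ifs <;> omega⟩

theorem exists_zigzag_eq_of_even {h v : ℕ} (hv : v ≤ 2 * h) (hv2 : v % 2 = 0) :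
    ∃ t ≤ h, zigzag (2 * h + 1) t = v := by
  obtain ⟨t, ht, hz | hz⟩ := exists_zigzag_eq_or_succ_eq (M := 2 * h + 1) (by omega : v ≤ _)
  · exact ⟨t, by omega, hz⟩
  · have := zigzag_mod_two_of_odd (t := t) (M := 2 * h + 1) (by omega) (by omega)
    omega

def rowSeq (m : ℕ) : ℕ → ℕ :=
  concatSeq (m / 2 + 1) (zigzag (2 * (m / 2) + 1))
    fun t => zigzag (2 * (m / 2) + 1) t + 2 * ((m + 1) / 2)

def colSeq (m : ℕ) : ℕ → ℕ :=
  concatSeq ((m + 1) / 2 + 1) (zigzag (2 * ((m + 1) / 2)))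
    fun t => zigzag (2 * ((m + 1) / 2)) t + 1

section GridColoring

variable {m : ℕ}

theorem exists_rowSeq_eq {s : ℕ} (hs : s < m) : ∃ i < m + 3, rowSeq m i = 2 * s := by
  rcases le_or_gt s (m / 2) with hsh | hsh
  · obtain ⟨t, ht, hz⟩ := exists_zigzag_eq_of_even (h := m / 2) (v := 2 * s) (by omega) (by omega)
    exact ⟨t, by omega, by rw [rowSeq, concatSeq_of_lt _ _ (by omega), hz]⟩
  · obtain ⟨t, ht, hz⟩ :=
      exists_zigzag_eq_of_even (h := m / 2) (v := 2 * s - 2 * ((m + 1) / 2)) (by omega) (by omega)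
    exact ⟨m / 2 + 1 + t, by omega, by rw [rowSeq, concatSeq_add, hz]; omega⟩

theorem exists_colSeq_eq {y : ℕ} (hy : y ≤ m) : ∃ j < m + 3, colSeq m j = y := by
  obtain ⟨t, ht, hz | hz⟩ :=
    exists_zigzag_eq_or_succ_eq (M := 2 * ((m + 1) / 2)) (v := y) (by omega)
  · exact ⟨t, by omega, by rw [colSeq, concatSeq_of_lt _ _ (by omega), hz]⟩
  · exact ⟨(m + 1) / 2 + 1 + t, by omega, by rw [colSeq, concatSeq_add, hz]⟩

theorem exists_rowSeq_steps {f : ℕ} (hf : 0 < f) (hfm : 2 * f ≤ m) :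
    ∃ i i' u, (i + 1 = i' ∨ i' + 1 = i) ∧ m / 2 + 1 + i < m + 3 ∧ m / 2 + 1 + i' < m + 3 ∧
      rowSeq m i = u ∧ rowSeq m i' = u + 2 * f ∧
      rowSeq m (m / 2 + 1 + i) = u + 2 * ((m + 1) / 2) ∧
      rowSeq m (m / 2 + 1 + i') = u + 2 * ((m + 1) / 2) + 2 * f := by
  obtain ⟨a, b, lo, hab, ha, hb, -, -, hza, hzb⟩ :=
    exists_zigzag_step (M := 2 * (m / 2) + 1) (t := m / 2 - f) (by omega)
  refine ⟨a, b, lo, hab, by omega, by omega, ?_, ?_, ?_, ?_⟩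
  · rw [rowSeq, concatSeq_of_lt _ _ (by omega), hza]
  · rw [rowSeq, concatSeq_of_lt _ _ (by omega), hzb]; omega
  · rw [rowSeq, concatSeq_add, hza]
  · rw [rowSeq, concatSeq_add, hzb]; omega

theorem exists_colSeq_step {d : ℕ} (hd : d % 2 = 1) (hdm : d ≤ m) (p : ℕ) :
    ∃ j j' w, (j + 1 = j' ∨ j' + 1 = j) ∧ j < m + 3 ∧ j' < m + 3 ∧ w % 2 = p % 2 ∧ w ≤ m + 1 ∧
      colSeq m j = w ∧ colSeq m j' = w + d := by
  obtain ⟨a, b, lo, hab, ha, hb, hlo2, hlo, hza, hzb⟩ :=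
    exists_zigzag_step (M := 2 * ((m + 1) / 2)) (t := (m + 1) / 2 - (d + 1) / 2) (by omega)
  rcases Nat.mod_two_eq_zero_or_one p with hp | hp
  · refine ⟨a, b, lo, hab, by omega, by omega, by omega, by omega, ?_, ?_⟩
    · rw [colSeq, concatSeq_of_lt _ _ (by omega), hza]
    · rw [colSeq, concatSeq_of_lt _ _ (by omega), hzb]; omega
  · refine ⟨(m + 1) / 2 + 1 + a, (m + 1) / 2 + 1 + b, lo + 1, by omega, by omega, by omega,
      by omega, by omega, ?_, ?_⟩
    · rw [colSeq, concatSeq_add, hza]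
    · rw [colSeq, concatSeq_add, hzb]; omega

theorem exists_rowSeq_cast_eq [NeZero m] (t : ℕ) :
    ∃ i < m + 3, (rowSeq m i : ZMod (2 * m)) = 2 * t := by
  obtain ⟨i, hi, hA⟩ := exists_rowSeq_eq (Nat.mod_lt t (NeZero.pos m))
  refine ⟨i, hi, ?_⟩
  have hk : ((2 * m : ℕ) : ZMod (2 * m)) = 0 := ZMod.natCast_self _
  have ht := congrArg (Nat.cast : ℕ → ZMod (2 * m)) (Nat.mod_add_div t m)
  rw [hA]
  push_cast at hk ht ⊢
  linear_combination 2 * ht - ((t / m : ℕ) : ZMod (2 * m)) * hk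

def gridColoring (m : ℕ) (p : Fin (m + 3) × Fin (m + 3)) : ZMod (2 * m) :=
  rowSeq m p.1 + colSeq m p.2

theorem exists_adj_gridColoring_of_odd [NeZero m] (x d : ZMod (2 * m)) (hd : d.val % 2 = 1)
    (hdm : d.val ≤ m) :
    ∃ u v, (gridGraph (m + 3) (m + 3)).Adj u v ∧
      gridColoring m u = x ∧ gridColoring m v = x + d := by
  obtain ⟨j, j', w, hjj', hj, hj', hw2, hwm, hB, hB'⟩ := exists_colSeq_step hd hdm x.val
  obtain ⟨i, hi, hA⟩ := exists_rowSeq_cast_eq (m := m) ((x.val + 2 * m - w) / 2)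
  have hx : (((x.val + 2 * m - w) / 2 * 2 + w : ℕ) : ZMod (2 * m)) = x := by
    rw [show (x.val + 2 * m - w) / 2 * 2 + w = x.val + 2 * m by omega, Nat.cast_add,
      ZMod.natCast_zmod_val, ZMod.natCast_self, add_zero]
  refine ⟨(⟨i, hi⟩, ⟨j, hj⟩), (⟨i, hi⟩, ⟨j', hj'⟩), Or.inl ⟨rfl, hjj'⟩, ?_, ?_⟩
  · simp only [gridColoring, hA, hB]
    push_cast at hx
    linear_combination hx
  · simp only [gridColoring, hA, hB']
    push_cast [ZMod.natCast_zmod_val] at hx ⊢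
    linear_combination hx

theorem exists_adj_gridColoring_of_even [NeZero m] (x d : ZMod (2 * m)) (hd : d.val % 2 = 0)
    (hd0 : d ≠ 0) (hdm : d.val ≤ m) :
    ∃ u v, (gridGraph (m + 3) (m + 3)).Adj u v ∧
      gridColoring m u = x ∧ gridColoring m v = x + d := by
  have hd_pos : d.val ≠ 0 := (ZMod.val_ne_zero d).2 hd0
  obtain ⟨i, i', u, hii', hi, hi', hA, hA', hA₂, hA₂'⟩ :=
    exists_rowSeq_steps (m := m) (f := d.val / 2) (by omega) (by omega)
  set r := (x - (u : ZMod (2 * m))).val with hr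
  have hr2m : r < 2 * m := ZMod.val_lt _
  have hxr : (u + r : ZMod (2 * m)) = x := by rw [hr, ZMod.natCast_zmod_val]; ring
  -- The base point `u` or its shifted copy lies within `m` below `x`, where the columns reach.
  obtain ⟨a, a', j, haa', ha, ha', hj, hsum, hsum'⟩ : ∃ a a' j, (a + 1 = a' ∨ a' + 1 = a) ∧
      a < m + 3 ∧ a' < m + 3 ∧ j < m + 3 ∧ rowSeq m a + colSeq m j = u + r ∧
      rowSeq m a' + colSeq m j = u + r + d.val := by
    rcases le_or_gt r m with hrm | hrm
    · obtain ⟨j, hj, hB⟩ := exists_colSeq_eq hrm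
      exact ⟨i, i', j, hii', by omega, by omega, hj, by omega, by omega⟩
    · obtain ⟨j, hj, hB⟩ := exists_colSeq_eq (m := m) (y := r - 2 * ((m + 1) / 2))
        (by omega)
      exact ⟨m / 2 + 1 + i, m / 2 + 1 + i', j, by omega, hi, hi', hj, by omega, by omega⟩
  refine ⟨(⟨a, ha⟩, ⟨j, hj⟩), (⟨a', ha'⟩, ⟨j, hj⟩), Or.inr ⟨rfl, haa'⟩, ?_, ?_⟩
  · have h := congrArg (Nat.cast : ℕ → ZMod (2 * m)) hsum
    push_cast at h
    simp only [gridColoring, h, hxr]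
  · have h := congrArg (Nat.cast : ℕ → ZMod (2 * m)) hsum'
    push_cast at h
    simp only [gridColoring, h, hxr, ZMod.natCast_zmod_val]

theorem isCompleteColoring_gridColoring [NeZero m] :
    IsCompleteColoring (gridGraph (m + 3) (m + 3)) (2 * m)
      fun p => ⟨(gridColoring m p).val, ZMod.val_lt _⟩ := by
  refine isCompleteColoring_of_forall_add _ fun x d hd0 hdm => ?_
  rw [Nat.mul_div_cancel_left m two_pos] at hdm
  rcases Nat.mod_two_eq_zero_or_one d.val with hd | hd
  · exact exists_adj_gridColoring_of_even x d hd hd0 hdm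
  · exact exists_adj_gridColoring_of_odd x d hd hdm

end GridColoring

theorem two_mul_sub_three_le_completeColoringNumber_gridGraph (n : ℕ) :
    2 * (n - 3) ≤ completeColoringNumber (gridGraph n n) := by
  rcases Nat.lt_or_ge n 4 with hn | hn
  · simp [show n - 3 = 0 by omega]
  obtain ⟨m, rfl⟩ : ∃ m, n = m + 3 := ⟨n - 3, by omega⟩
  have : NeZero m := ⟨by omega⟩
  simpa using isCompleteColoring_gridColoring.le_completeColoringNumber

theorem gamma_grid_lower_bounds_general (n : ℕ) :
    (2 * (n : ℤ) - 9 ≤ (completeColoringNumber (gridGraph n n) : ℤ)) ∧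
    (n % 4 = 0 ∨ n % 4 = 1 → 2 * (n : ℤ) - 6 ≤ (completeColoringNumber (gridGraph n n) : ℤ)) ∧
    (n % 4 = 2 → 2 * (n : ℤ) - 7 ≤ (completeColoringNumber (gridGraph n n) : ℤ)) ∧
    (n % 4 = 3 → 2 * (n : ℤ) - 9 ≤ (completeColoringNumber (gridGraph n n) : ℤ)) := by
  have h := two_mul_sub_three_le_completeColoringNumber_gridGraph n
  refine ⟨?_, fun _ => ?_, fun _ => ?_, fun _ => ?_⟩ <;> omega

/-- For every `n ≥ 2`, `Γ(G_n) ≥ 2n − 9`; moreover `Γ(G_n) ≥ 2n − 6` if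
`n ≡ 0, 1 (mod 4)`, `Γ(G_n) ≥ 2n − 7` if `n ≡ 2 (mod 4)`, and
`Γ(G_n) ≥ 2n − 9` if `n ≡ 3 (mod 4)`. -/
theorem gamma_grid_lower_bounds (n : ℕ) (hn : 2 ≤ n) :
    (2 * (n : ℤ) - 9 ≤ (completeColoringNumber (gridGraph n n) : ℤ)) ∧
    (n % 4 = 0 ∨ n % 4 = 1 → 2 * (n : ℤ) - 6 ≤ (completeColoringNumber (gridGraph n n) : ℤ)) ∧
    (n % 4 = 2 → 2 * (n : ℤ) - 7 ≤ (completeColoringNumber (gridGraph n n) : ℤ)) ∧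
    (n % 4 = 3 → 2 * (n : ℤ) - 9 ≤ (completeColoringNumber (gridGraph n n) : ℤ)) :=
  gamma_grid_lower_bounds_general n
end

section
/- If a finite simple graph G with maximum degree Δ(G) admits a k-complete coloring, then k·⌈(k−1)/Δ(G)⌉ ≤ |V(G)|. Consequently Γ(G) ≤ max{k : k⌈(k−1)/Δ(G)⌉ ≤ |V(G)|}. -/
/-! A color class `C` of a complete coloring must have a neighbour of each of the other `k - 1`
colors, and its neighbourhood has at most `|C| Δ` vertices. So every class has at least
`⌈(k - 1) / Δ⌉` vertices, and summing over the `k` classes bounds `|V|`. -/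

open Finset

namespace SimpleGraph

variable {V : Type*} [Fintype V] (G : SimpleGraph V) [DecidableRel G.Adj]

theorem card_biUnion_neighborFinset_le [DecidableEq V] (s : Finset V) :
    #(s.biUnion (fun v => G.neighborFinset v)) ≤ #s * G.maxDegree :=
  calc #(s.biUnion (fun v => G.neighborFinset v))
      _ ≤ ∑ v ∈ s, #(G.neighborFinset v) := card_biUnion_le
      _ ≤ #s * G.maxDegree := by
        simpa only [smul_eq_mul] using sum_le_card_nsmul s _ _ fun v _ =>
          (G.card_neighborFinset_eq_degree v).trans_le (G.degree_le_maxDegree v)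

end SimpleGraph

namespace IsCompleteColoring

variable {V : Type*} [Fintype V] {G : SimpleGraph V} [DecidableRel G.Adj]
  {k : ℕ} {c : V → Fin k}

theorem erase_subset_image_biUnion_neighborFinset [DecidableEq V] (hc : IsCompleteColoring G k c)
    (i : Fin k) :
    univ.erase i ⊆
      (({u | c u = i} : Finset V).biUnion (fun v => G.neighborFinset v)).image c := by
  intro j hj
  obtain ⟨u, v, huv, hu, hv⟩ := hc i j (ne_of_mem_erase hj).symm
  exact mem_image.2 ⟨v, mem_biUnion.2 ⟨u, by simpa using hu, by simpa using huv⟩, hv⟩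

theorem ceilDiv_maxDegree_le_card_colorClass (hc : IsCompleteColoring G k c) (i : Fin k) :
    (k - 1) ⌈/⌉ G.maxDegree ≤ #({u | c u = i} : Finset V) := by
  classical
  rcases Nat.eq_zero_or_pos G.maxDegree with hΔ | hΔ
  · simp [hΔ]
  rw [ceilDiv_le_iff_le_mul hΔ, mul_comm]
  calc k - 1 = #(univ.erase i) := by simp
    _ ≤ #((({u | c u = i} : Finset V).biUnion (fun v => G.neighborFinset v)).image c) :=
      card_le_card (hc.erase_subset_image_biUnion_neighborFinset i)
    _ ≤ #(({u | c u = i} : Finset V).biUnion (fun v => G.neighborFinset v)) := card_image_le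
    _ ≤ #({u | c u = i} : Finset V) * G.maxDegree := G.card_biUnion_neighborFinset_le _

theorem mul_ceilDiv_maxDegree_le_card (hc : IsCompleteColoring G k c) :
    k * ((k - 1) ⌈/⌉ G.maxDegree) ≤ Fintype.card V :=
  calc k * ((k - 1) ⌈/⌉ G.maxDegree)
      _ = ∑ _i : Fin k, (k - 1) ⌈/⌉ G.maxDegree := by simp
      _ ≤ ∑ i : Fin k, #({u | c u = i} : Finset V) :=
        sum_le_sum fun i _ => hc.ceilDiv_maxDegree_le_card_colorClass i
      _ = Fintype.card V := by
        rw [← card_univ, card_eq_sum_card_fiberwise fun v _ => mem_univ (c v)]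

end IsCompleteColoring

theorem Nat.bddAbove_setOf_mul_ceilDiv_le {d : ℕ} (hd : 0 < d) (n : ℕ) :
    BddAbove {k : ℕ | k * ((k - 1) ⌈/⌉ d) ≤ n} := by
  refine ⟨n + 1, fun k (hk : k * _ ≤ n) => ?_⟩
  by_contra! hkn
  have hpos : 0 < (k - 1) ⌈/⌉ d := by
    by_contra! h0
    rw [ceilDiv_le_iff_le_mul hd] at h0
    omega
  nlinarith

theorem completeColoring_vertex_bound_general {V : Type*} [Fintype V]
    (G : SimpleGraph V) [DecidableRel G.Adj] (hE : G.edgeSet.Nonempty) :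
    (∀ (k : ℕ) (c : V → Fin k), IsCompleteColoring G k c →
      k * ((k - 1) ⌈/⌉ G.maxDegree) ≤ Fintype.card V) ∧
    completeColoringNumber G ≤
      sSup {k : ℕ | k * ((k - 1) ⌈/⌉ G.maxDegree) ≤ Fintype.card V} := by
  have hΔ : 0 < G.maxDegree :=
    Nat.pos_of_ne_zero <| G.maxDegree_eq_zero_iff.not.2 <| G.edgeSet_nonempty.1 hE
  have hone : ∃ c : V → Fin 1, IsCompleteColoring G 1 c :=
    ⟨fun _ => 0, fun i j hij => (hij (Subsingleton.elim i j)).elim⟩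
  refine ⟨fun k c hc => hc.mul_ceilDiv_maxDegree_le_card, ?_⟩
  refine csSup_le_csSup (Nat.bddAbove_setOf_mul_ceilDiv_le hΔ _) ⟨1, hone⟩ ?_
  rintro k ⟨c, hc⟩
  exact hc.mul_ceilDiv_maxDegree_le_card

/-- If a finite simple graph `G` with at least one edge admits a `k`-complete
coloring, then `k·⌈(k−1)/Δ(G)⌉ ≤ |V(G)|`; consequently
`Γ(G) ≤ max {k | k·⌈(k−1)/Δ(G)⌉ ≤ |V(G)|}`. -/
theorem completeColoring_vertex_bound {V : Type*} [Fintype V] [DecidableEq V]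
    (G : SimpleGraph V) [DecidableRel G.Adj] (hE : G.edgeSet.Nonempty) :
    (∀ (k : ℕ) (c : V → Fin k), IsCompleteColoring G k c →
      k * ((k - 1) ⌈/⌉ G.maxDegree) ≤ Fintype.card V) ∧
    completeColoringNumber G ≤
      sSup {k : ℕ | k * ((k - 1) ⌈/⌉ G.maxDegree) ≤ Fintype.card V} :=
  completeColoring_vertex_bound_general G hE
end
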